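/- Let (N, 𝐠) be a Lorentzian manifold carrying two Killing fields Y and Z, let U ⊂ N be a spacelike hypersurface with future unit normal n, and write Y = 2f_Y n + X_Y and Z = 2f_Z n + X_Z along U with X_Y, X_Z tangential. Then the commutator W = [Y, Z] decomposes along U as W = 2f n + X with f = X_Y(f_Z) − X_Z(f_Y) and X = [X_Y, X_Z] + 4(f_Y ∇f_Z − f_Z ∇f_Y), where ∇ is the gradient in the induced metric on U. -/

import Mathlib

open scoped Matrix

noncomputable section

/-- Points/vectors of the coordinate chart `ℝᵐ`. -/
abbrev Vec (m : ℕ) := Fin m → ℝ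

variable {m : ℕ}

/-- The `i`-th standard coordinate vector field `∂/∂xⁱ`. -/
def ebasis (i : Fin m) : Vec m := Pi.single i 1

/-- Partial derivative `∂ᵢ f` of a scalar function. -/
def pd (f : Vec m → ℝ) (i : Fin m) (x : Vec m) : ℝ := fderiv ℝ f x (ebasis i)

/-- The metric `g` (given by its coordinate matrix) applied to two vectors. -/
def apg (g : Vec m → Matrix (Fin m) (Fin m) ℝ) (x v w : Vec m) : ℝ := v ⬝ᵥ (g x).mulVec w

/-- Coordinate formula for the Lie derivative of the metric `g` along the vector field `X`:
`(L_X g)_{ij} = X^l ∂_l g_{ij} + g_{lj} ∂_i X^l + g_{il} ∂_j X^l`. -/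
def lieD (X : Vec m → Vec m) (g : Vec m → Matrix (Fin m) (Fin m) ℝ) (x : Vec m)
    (i j : Fin m) : ℝ :=
  fderiv ℝ (fun y => g y i j) x (X x)
    + ∑ l, g x l j * fderiv ℝ X x (ebasis i) l
    + ∑ l, g x i l * fderiv ℝ X x (ebasis j) l

/-- Lie bracket of vector fields, in coordinates: `[X,Y] = DY·X − DX·Y`. -/
def lieBkt (X Y : Vec m → Vec m) (x : Vec m) : Vec m :=
  fderiv ℝ Y x (X x) - fderiv ℝ X x (Y x)

variable {n : ℕ}

/-- Embedding of the slice `U = {x⁰ = 0}` into the spacetime chart `ℝ^{n+1}`. -/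
def emb (y : Vec n) : Vec (n + 1) := Fin.cons 0 y

/-- Embedding of a slice-tangential vector into the spacetime chart (0 time component). -/
def embV (v : Vec n) : Vec (n + 1) := Fin.cons 0 v

/-- Induced (first fundamental form) metric on the slice `{x⁰ = 0}`. -/
def indMetric (G : Vec (n + 1) → Matrix (Fin (n + 1)) (Fin (n + 1)) ℝ)
    (y : Vec n) : Matrix (Fin n) (Fin n) ℝ :=
  Matrix.of fun i j => G (emb y) i.succ j.succ

/-- Second fundamental form of the slice with respect to the future unit normal `nv`:
`k_{ij} = ½ (L_{nv} G)_{ij}` (tangential components), which for the Levi-Civita connection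
equals `½(G(∇_i nv, e_j) + G(e_i, ∇_j nv))`. -/
def secondFF (G : Vec (n + 1) → Matrix (Fin (n + 1)) (Fin (n + 1)) ℝ)
    (nv : Vec (n + 1) → Vec (n + 1)) (y : Vec n) (i j : Fin n) : ℝ :=
  (1 / 2) * lieD nv G (emb y) i.succ j.succ

/-- `ḡ`-trace of the second fundamental form. -/
def trSecondFF (G : Vec (n + 1) → Matrix (Fin (n + 1)) (Fin (n + 1)) ℝ)
    (nv : Vec (n + 1) → Vec (n + 1)) (y : Vec n) : ℝ :=
  ∑ i, ∑ j, (indMetric G y)⁻¹ i j * secondFF G nv y i j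

/-- Conjugate momentum tensor (with indices lowered by `ḡ`):
`π_{ij} = k_{ij} − (tr_{ḡ} k) ḡ_{ij}`, the inverse of
`k_{ij} = ḡ_{il}ḡ_{jm}π^{lm} − (tr_{ḡ}π)/(n−1) ḡ_{ij}`. -/
def momLow (G : Vec (n + 1) → Matrix (Fin (n + 1)) (Fin (n + 1)) ℝ)
    (nv : Vec (n + 1) → Vec (n + 1)) (y : Vec n) (i j : Fin n) : ℝ :=
  secondFF G nv y i j - trSecondFF G nv y * indMetric G y i j

/-- `ḡ`-trace of the conjugate momentum tensor: `tr_{ḡ} π = ḡ^{ij} π_{ij}`. -/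
def trMom (G : Vec (n + 1) → Matrix (Fin (n + 1)) (Fin (n + 1)) ℝ)
    (nv : Vec (n + 1) → Vec (n + 1)) (y : Vec n) : ℝ :=
  ∑ i, ∑ j, (indMetric G y)⁻¹ i j * momLow G nv y i j

/-- `ḡ`-gradient of a function on the slice. -/
def gradSlice (G : Vec (n + 1) → Matrix (Fin (n + 1)) (Fin (n + 1)) ℝ)
    (h : Vec n → ℝ) (y : Vec n) : Vec n :=
  (indMetric G y)⁻¹.mulVec fun i => fderiv ℝ h y (Pi.single i 1)

/-! Along `U`, `[Y, Z] = DZ·Y − DY·Z`; differentiating the decompositions of `Y` and `Z` along `U`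
splits it into `2 f n + [X_Y, X_Z]` plus the remainder
`2 f_Y (DZ·n − Dn·X_Z) − 2 f_Z (DY·n − Dn·X_Y)`. Since `U` is spacelike, a vector is determined by
its pairings with `n` and with the coordinate directions of `U`. These pairings of the remainder
follow from the Killing equation together with the derivatives of `G(n, n) = −1` and
`G(n, ∂ᵢ) = 0` along `U`: all terms containing derivatives of `G` or of `n` cancel in the
antisymmetric combination, leaving `4 (f_Y df_Z − f_Z df_Y)`. -/

section Metric

variable (g : Vec m → Matrix (Fin m) (Fin m) ℝ) (x : Vec m)

lemma apg_eq_toLinearMap₂' (v w : Vec m) : apg g x v w = Matrix.toLinearMap₂' ℝ (g x) v w :=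
  (Matrix.toLinearMap₂'_apply' _ _ _).symm

@[simp] lemma apg_add_left (u v w : Vec m) : apg g x (u + v) w = apg g x u w + apg g x v w := by
  simp only [apg_eq_toLinearMap₂', map_add, LinearMap.add_apply]

@[simp] lemma apg_sub_left (u v w : Vec m) : apg g x (u - v) w = apg g x u w - apg g x v w := by
  simp only [apg_eq_toLinearMap₂', map_sub, LinearMap.sub_apply]

@[simp] lemma apg_smul_left (c : ℝ) (v w : Vec m) : apg g x (c • v) w = c * apg g x v w := by
  simp only [apg_eq_toLinearMap₂', map_smul, LinearMap.smul_apply, smul_eq_mul]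

@[simp] lemma apg_add_right (u v w : Vec m) : apg g x u (v + w) = apg g x u v + apg g x u w := by
  simp only [apg_eq_toLinearMap₂', map_add]

@[simp] lemma apg_smul_right (c : ℝ) (v w : Vec m) : apg g x v (c • w) = c * apg g x v w := by
  simp only [apg_eq_toLinearMap₂', map_smul, smul_eq_mul]

@[simp] lemma apg_zero_right (v : Vec m) : apg g x v 0 = 0 := by
  simp only [apg_eq_toLinearMap₂', map_zero]

lemma apg_comm (hg : (g x).IsSymm) (v w : Vec m) : apg g x v w = apg g x w v := by
  rw [apg, apg, Matrix.dotProduct_mulVec, ← Matrix.mulVec_transpose, hg, dotProduct_comm]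

def metricDeriv (w : Vec m) : Matrix (Fin m) (Fin m) ℝ :=
  Matrix.of fun i j => fderiv ℝ (fun x => g x i j) x w

@[simp] lemma metricDeriv_add (v w : Vec m) :
    metricDeriv g x (v + w) = metricDeriv g x v + metricDeriv g x w := by
  ext i j; simp [metricDeriv]

@[simp] lemma metricDeriv_smul (c : ℝ) (v : Vec m) :
    metricDeriv g x (c • v) = c • metricDeriv g x v := by
  ext i j; simp [metricDeriv]

def jacobian (X : Vec m → Vec m) : Matrix (Fin m) (Fin m) ℝ :=
  LinearMap.toMatrix' (fderiv ℝ X x : Vec m →ₗ[ℝ] Vec m)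

lemma fderiv_eq_jacobian_mulVec (X : Vec m → Vec m) (v : Vec m) :
    fderiv ℝ X x v = jacobian x X *ᵥ v := by
  rw [jacobian, LinearMap.toMatrix'_mulVec]; rfl

lemma of_lieD_eq (X : Vec m → Vec m) :
    Matrix.of (lieD X g x)
      = metricDeriv g x (X x) + (jacobian x X)ᵀ * g x + g x * jacobian x X := by
  ext i j
  simp [lieD, metricDeriv, jacobian, Matrix.mul_apply, LinearMap.toMatrix'_apply, ebasis, mul_comm]

lemma killing_equation_apply {X : Vec m → Vec m} (hX : ∀ i j, lieD X g x i j = 0)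
    (u v : Vec m) :
    u ⬝ᵥ metricDeriv g x (X x) *ᵥ v + apg g x (fderiv ℝ X x u) v + apg g x u (fderiv ℝ X x v)
      = 0 := by
  have h : u ⬝ᵥ Matrix.of (lieD X g x) *ᵥ v = 0 := by
    simp [show Matrix.of (lieD X g x) = 0 from Matrix.ext hX]
  rw [of_lieD_eq, Matrix.add_mulVec, Matrix.add_mulVec, dotProduct_add, dotProduct_add,
    ← Matrix.mulVec_mulVec, ← Matrix.mulVec_mulVec, Matrix.dotProduct_mulVec u (jacobian x X)ᵀ,
    Matrix.vecMul_transpose] at h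
  simpa only [apg, fderiv_eq_jacobian_mulVec] using h

lemma apg_eq_sum (v w : Vec m) : apg g x v w = ∑ i, ∑ j, v i * g x i j * w j := by
  simp [apg, dotProduct, Matrix.mulVec, Finset.mul_sum, mul_assoc]

lemma fderiv_apg_comp {k : ℕ} {F A B : Vec k → Vec m} {q : Vec k}
    (hg : ∀ i j, DifferentiableAt ℝ (fun x => g x i j) (F q))
    (hF : DifferentiableAt ℝ F q) (hA : DifferentiableAt ℝ A q)
    (hB : DifferentiableAt ℝ B q) (w : Vec k) :
    fderiv ℝ (fun z => apg g (F z) (A z) (B z)) q w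
      = A q ⬝ᵥ metricDeriv g (F q) (fderiv ℝ F q w) *ᵥ B q
        + apg g (F q) (fderiv ℝ A q w) (B q) + apg g (F q) (A q) (fderiv ℝ B q w) := by
  simp only [apg_eq_sum]
  rw [fderiv_fun_sum (fun i _ => by fun_prop)]
  simp (disch := fun_prop) only [fderiv_fun_sum, fderiv_fun_mul, sum_apply, add_apply,
    smul_apply, smul_eq_mul, fderiv_apply hA, fderiv_apply hB, fderiv_fun_comp q (hg _ _) hF,
    ContinuousLinearMap.comp_apply, ContinuousLinearMap.proj_apply]
  simp only [metricDeriv, dotProduct, Matrix.mulVec, Matrix.of_apply, Finset.mul_sum,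
    ← Finset.sum_add_distrib]
  exact Finset.sum_congr rfl fun i _ => Finset.sum_congr rfl fun j _ => by ring

end Metric

section Slice

-- `emb` and `embV` are both `Fin.cons 0`, so `embVL` is also `emb`, definitionally.
def embVL (n : ℕ) : Vec n →L[ℝ] Vec (n + 1) :=
  ContinuousLinearMap.finCons 0 (ContinuousLinearMap.id ℝ (Vec n))

@[simp] lemma embVL_apply (v : Vec n) : embVL n v = embV v := rfl

@[simp] lemma embV_add (v w : Vec n) : embV (v + w) = embV v + embV w := map_add (embVL n) v w

@[simp] lemma embV_sub (v w : Vec n) : embV (v - w) = embV v - embV w := map_sub (embVL n) v w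

@[simp] lemma embV_smul (c : ℝ) (v : Vec n) : embV (c • v) = c • embV v := map_smul (embVL n) c v

lemma fderiv_emb (y : Vec n) : fderiv ℝ emb y = embVL n := (embVL n).fderiv

lemma fderiv_comp_emb {E : Type*} [NormedAddCommGroup E] [NormedSpace ℝ E]
    {Φ : Vec (n + 1) → E} {y : Vec n} (hΦ : DifferentiableAt ℝ Φ (emb y)) (v : Vec n) :
    fderiv ℝ (fun z => Φ (emb z)) y v = fderiv ℝ Φ (emb y) (embV v) := by
  have h : HasFDerivAt (fun z => Φ (emb z)) ((fderiv ℝ Φ (emb y)).comp (embVL n)) y :=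
    hΦ.hasFDerivAt.comp y (embVL n).hasFDerivAt
  rw [h.fderiv]
  rfl

lemma fderiv_embV_of_decomp {V nv : Vec (n + 1) → Vec (n + 1)} {f : Vec n → ℝ}
    {X : Vec n → Vec n} {y : Vec n}
    (hdecomp : ∀ y, V (emb y) = (2 * f y) • nv (emb y) + embV (X y))
    (hV : DifferentiableAt ℝ V (emb y)) (hnv : DifferentiableAt ℝ nv (emb y))
    (hf : DifferentiableAt ℝ f y) (hX : DifferentiableAt ℝ X y) (v : Vec n) :
    fderiv ℝ V (emb y) (embV v) = (2 * fderiv ℝ f y v) • nv (emb y)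
      + (2 * f y) • fderiv ℝ nv (emb y) (embV v) + embV (fderiv ℝ X y v) := by
  have h : HasFDerivAt (fun z => V (emb z))
      ((2 * f y) • (fderiv ℝ nv (emb y)).comp (embVL n)
        + ((2 : ℝ) • fderiv ℝ f y).smulRight (nv (emb y)) + (embVL n).comp (fderiv ℝ X y)) y := by
    rw [funext hdecomp]
    exact ((hf.hasFDerivAt.const_mul 2).smul (hnv.hasFDerivAt.comp y (embVL n).hasFDerivAt)).add
      ((embVL n).hasFDerivAt.comp y hX.hasFDerivAt)
  rw [← fderiv_comp_emb hV, h.fderiv]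
  simp only [add_apply, smul_apply, ContinuousLinearMap.smulRight_apply,
    ContinuousLinearMap.comp_apply, embVL_apply, smul_eq_mul]
  abel

end Slice

section InducedMetric

variable (G : Vec (n + 1) → Matrix (Fin (n + 1)) (Fin (n + 1)) ℝ) (y : Vec n)

lemma apg_embV_embV (u v : Vec n) :
    apg G (emb y) (embV u) (embV v) = u ⬝ᵥ indMetric G y *ᵥ v := by
  simp only [apg_eq_sum, Fin.sum_univ_succ, embV, Fin.cons_zero, Fin.cons_succ, zero_mul,
    mul_zero, Finset.sum_const_zero, zero_add, indMetric, dotProduct, Matrix.mulVec,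
    Matrix.of_apply, Finset.mul_sum, mul_assoc]

lemma apg_embV_eq_zero {N : Vec (n + 1)}
    (hN : ∀ i, apg G (emb y) N (embV (Pi.single i 1)) = 0) (w : Vec n) :
    apg G (emb y) N (embV w) = 0 := by
  have h : (Matrix.toLinearMap₂' ℝ (G (emb y)) N).comp (embVL n).toLinearMap = 0 :=
    (Pi.basisFun ℝ (Fin n)).ext fun i => by simpa [apg_eq_toLinearMap₂'] using hN i
  simpa [apg_eq_toLinearMap₂'] using LinearMap.congr_fun h w

lemma apg_embV_gradSlice (hpd : (indMetric G y).PosDef) (h : Vec n → ℝ) (i : Fin n) :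
    apg G (emb y) (embV (gradSlice G h y)) (embV (Pi.single i 1))
      = fderiv ℝ h y (Pi.single i 1) := by
  have hsymm : (indMetric G y)ᵀ = indMetric G y := by
    simpa [Matrix.conjTranspose_eq_transpose_of_trivial] using hpd.isHermitian.eq
  have hinv : indMetric G y * (indMetric G y)⁻¹ = 1 :=
    Matrix.mul_nonsing_inv _ ((Matrix.isUnit_iff_isUnit_det _).mp hpd.isUnit)
  rw [apg_embV_embV, gradSlice, dotProduct_comm, Matrix.dotProduct_mulVec,
    ← Matrix.vecMul_transpose, hsymm, Matrix.vecMul_vecMul, hinv, Matrix.vecMul_one,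
    single_dotProduct, one_mul]

end InducedMetric

section Nondegenerate

variable {G : Vec (n + 1) → Matrix (Fin (n + 1)) (Fin (n + 1)) ℝ} {y : Vec n}

lemma embV_tail {v : Vec (n + 1)} (hv : v 0 = 0) : embV (Fin.tail v) = v :=
  (congrArg (Fin.cons · (Fin.tail v)) hv.symm).trans (Fin.cons_self_tail v)

lemma apply_zero_ne_zero_of_apg_self_neg (hpd : (indMetric G y).PosDef) {N : Vec (n + 1)}
    (hN : apg G (emb y) N N < 0) : N 0 ≠ 0 := by
  intro h0
  rw [← embV_tail h0, apg_embV_embV] at hN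
  have := hpd.posSemidef.dotProduct_mulVec_nonneg (Fin.tail N)
  simp only [star_trivial] at this
  linarith

lemma eq_zero_of_apg_embV_eq_zero (hpd : (indMetric G y).PosDef) {w : Vec n}
    (hw : ∀ i, apg G (emb y) (embV w) (embV (Pi.single i 1)) = 0) : w = 0 := by
  have hvecMul : w ᵥ* indMetric G y = 0 := funext fun i => by
    simpa only [apg_embV_embV, Matrix.dotProduct_mulVec, dotProduct_single, mul_one,
      Pi.zero_apply] using hw i
  by_contra hne
  have := hpd.dotProduct_mulVec_pos hne
  rw [star_trivial, Matrix.dotProduct_mulVec, hvecMul, zero_dotProduct] at this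
  exact lt_irrefl 0 this

lemma ext_of_apg_normal_of_apg_tangent (hsym : (G (emb y)).IsSymm) (hpd : (indMetric G y).PosDef)
    {N : Vec (n + 1)} (hunit : apg G (emb y) N N = -1)
    (hnormal : ∀ w, apg G (emb y) N (embV w) = 0) {v v' : Vec (n + 1)}
    (hN : apg G (emb y) v N = apg G (emb y) v' N)
    (htan : ∀ i, apg G (emb y) v (embV (Pi.single i 1)) = apg G (emb y) v' (embV (Pi.single i 1))) :
    v = v' := by
  rw [← sub_eq_zero]
  set c := (v - v') 0 / N 0
  have hN0 : N 0 ≠ 0 := apply_zero_ne_zero_of_apg_self_neg hpd (by rw [hunit]; norm_num)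
  have hdecomp : v - v' = c • N + embV (Fin.tail (v - v' - c • N)) := by
    rw [embV_tail (by simp [c, div_mul_cancel₀ _ hN0])]
    abel
  have hc : c = 0 := by
    have h := congrArg (fun u => apg G (emb y) u N) hdecomp
    simp only [apg_sub_left, hN, sub_self, apg_add_left, apg_smul_left, hunit,
      apg_comm G (emb y) hsym (embV _), hnormal] at h
    linarith
  have hw : Fin.tail (v - v' - c • N) = 0 := eq_zero_of_apg_embV_eq_zero hpd fun i => by
    have h := congrArg (fun u => apg G (emb y) u (embV (Pi.single i 1))) hdecomp
    simpa [htan, hc] using h.symm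
  rw [hdecomp, hw, hc, zero_smul, zero_add]
  exact map_zero (embVL n)

end Nondegenerate

section Normal

variable {G : Vec (n + 1) → Matrix (Fin (n + 1)) (Fin (n + 1)) ℝ}
  {nv : Vec (n + 1) → Vec (n + 1)} {y : Vec n}

lemma fderiv_apg_emb {A B : Vec (n + 1) → Vec (n + 1)}
    (hG : ∀ i j, DifferentiableAt ℝ (fun x => G x i j) (emb y))
    (hA : DifferentiableAt ℝ A (emb y)) (hB : DifferentiableAt ℝ B (emb y)) (w : Vec n) :
    fderiv ℝ (fun z => apg G (emb z) (A (emb z)) (B (emb z))) y w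
      = A (emb y) ⬝ᵥ metricDeriv G (emb y) (embV w) *ᵥ B (emb y)
        + apg G (emb y) (fderiv ℝ A (emb y) (embV w)) (B (emb y))
        + apg G (emb y) (A (emb y)) (fderiv ℝ B (emb y) (embV w)) := by
  rw [fderiv_apg_comp G (F := emb) (A := fun z => A (emb z)) (B := fun z => B (emb z)) hG
    (embVL n).differentiableAt (hA.comp y (embVL n).differentiableAt)
    (hB.comp y (embVL n).differentiableAt), fderiv_comp_emb hA, fderiv_comp_emb hB,
    fderiv_emb, embVL_apply]

lemma metricDeriv_normal_normal (hsym : (G (emb y)).IsSymm)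
    (hG : ∀ i j, DifferentiableAt ℝ (fun x => G x i j) (emb y))
    (hnv : DifferentiableAt ℝ nv (emb y))
    (hunit : ∀ y : Vec n, apg G (emb y) (nv (emb y)) (nv (emb y)) = -1) (w : Vec n) :
    nv (emb y) ⬝ᵥ metricDeriv G (emb y) (embV w) *ᵥ nv (emb y)
      + 2 * apg G (emb y) (fderiv ℝ nv (emb y) (embV w)) (nv (emb y)) = 0 := by
  have h := fderiv_apg_emb hG hnv hnv w
  rw [funext hunit, fderiv_const_apply, apg_comm G _ hsym (nv _)] at h
  simp only [zero_apply] at h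
  linarith

lemma metricDeriv_normal_embV (hG : ∀ i j, DifferentiableAt ℝ (fun x => G x i j) (emb y))
    (hnv : DifferentiableAt ℝ nv (emb y))
    (hnormal : ∀ y : Vec n, ∀ t, apg G (emb y) (nv (emb y)) (embV t) = 0) (t w : Vec n) :
    nv (emb y) ⬝ᵥ metricDeriv G (emb y) (embV w) *ᵥ embV t
      + apg G (emb y) (fderiv ℝ nv (emb y) (embV w)) (embV t) = 0 := by
  have h := fderiv_apg_emb hG hnv (differentiableAt_const (embV t)) w
  rw [funext fun z => hnormal z t, fderiv_const_apply, fderiv_const_apply] at h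
  simp only [zero_apply, apg_zero_right, add_zero] at h
  linarith

end Normal

section Killing

variable {G : Vec (n + 1) → Matrix (Fin (n + 1)) (Fin (n + 1)) ℝ}
  {nv Z : Vec (n + 1) → Vec (n + 1)} {f : Vec n → ℝ} {X : Vec n → Vec n} {y : Vec n}

lemma killing_normal_component (hsym : (G (emb y)).IsSymm)
    (hG : ∀ i j, DifferentiableAt ℝ (fun x => G x i j) (emb y))
    (hnv : DifferentiableAt ℝ nv (emb y)) (hK : ∀ i j, lieD Z G (emb y) i j = 0)
    (hunit : ∀ y : Vec n, apg G (emb y) (nv (emb y)) (nv (emb y)) = -1)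
    (hdecomp : ∀ y, Z (emb y) = (2 * f y) • nv (emb y) + embV (X y)) :
    apg G (emb y) (fderiv ℝ Z (emb y) (nv (emb y)) - fderiv ℝ nv (emb y) (embV (X y)))
        (nv (emb y))
      = -(f y * (nv (emb y) ⬝ᵥ metricDeriv G (emb y) (nv (emb y)) *ᵥ nv (emb y))) := by
  have hkilling := killing_equation_apply G (emb y) hK (nv (emb y)) (nv (emb y))
  rw [hdecomp y, apg_comm G _ hsym (nv _)] at hkilling
  simp only [metricDeriv_add, metricDeriv_smul, Matrix.add_mulVec, Matrix.smul_mulVec,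
    dotProduct_add, dotProduct_smul, smul_eq_mul] at hkilling
  have hunit' := metricDeriv_normal_normal hsym hG hnv hunit (X y)
  rw [apg_sub_left]
  linear_combination hkilling / 2 - hunit' / 2

lemma killing_tangent_component (hG : ∀ i j, DifferentiableAt ℝ (fun x => G x i j) (emb y))
    (hZ : DifferentiableAt ℝ Z (emb y)) (hnv : DifferentiableAt ℝ nv (emb y))
    (hf : DifferentiableAt ℝ f y) (hX : DifferentiableAt ℝ X y)
    (hK : ∀ i j, lieD Z G (emb y) i j = 0)
    (hunit : ∀ y : Vec n, apg G (emb y) (nv (emb y)) (nv (emb y)) = -1)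
    (hnormal : ∀ y : Vec n, ∀ t, apg G (emb y) (nv (emb y)) (embV t) = 0)
    (hdecomp : ∀ y, Z (emb y) = (2 * f y) • nv (emb y) + embV (X y)) (t : Vec n) :
    apg G (emb y) (fderiv ℝ Z (emb y) (nv (emb y)) - fderiv ℝ nv (emb y) (embV (X y)))
        (embV t)
      = 2 * fderiv ℝ f y t - 2 * f y * (nv (emb y) ⬝ᵥ metricDeriv G (emb y) (nv (emb y)) *ᵥ embV t
          + apg G (emb y) (nv (emb y)) (fderiv ℝ nv (emb y) (embV t))) := by
  have hkilling := killing_equation_apply G (emb y) hK (nv (emb y)) (embV t)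
  rw [fderiv_embV_of_decomp hdecomp hZ hnv hf hX t, hdecomp y] at hkilling
  simp only [metricDeriv_add, metricDeriv_smul, Matrix.add_mulVec, Matrix.smul_mulVec,
    dotProduct_add, dotProduct_smul, smul_eq_mul, apg_add_right, apg_smul_right, hunit y,
    hnormal y] at hkilling
  have hnormal' := metricDeriv_normal_embV hG hnv hnormal t (X y)
  rw [apg_sub_left]
  linear_combination hkilling - hnormal'

lemma lieBkt_emb_of_decomp {Y : Vec (n + 1) → Vec (n + 1)} {fY fZ : Vec n → ℝ}
    {XY XZ : Vec n → Vec n} (hY : DifferentiableAt ℝ Y (emb y))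
    (hZ : DifferentiableAt ℝ Z (emb y)) (hnv : DifferentiableAt ℝ nv (emb y))
    (hfY : DifferentiableAt ℝ fY y) (hfZ : DifferentiableAt ℝ fZ y)
    (hXY : DifferentiableAt ℝ XY y) (hXZ : DifferentiableAt ℝ XZ y)
    (hdecompY : ∀ y, Y (emb y) = (2 * fY y) • nv (emb y) + embV (XY y))
    (hdecompZ : ∀ y, Z (emb y) = (2 * fZ y) • nv (emb y) + embV (XZ y)) :
    lieBkt Y Z (emb y)
      = (2 * (fderiv ℝ fZ y (XY y) - fderiv ℝ fY y (XZ y))) • nv (emb y)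
        + embV (lieBkt XY XZ y)
        + ((2 * fY y) • (fderiv ℝ Z (emb y) (nv (emb y)) - fderiv ℝ nv (emb y) (embV (XZ y)))
          - (2 * fZ y) • (fderiv ℝ Y (emb y) (nv (emb y))
              - fderiv ℝ nv (emb y) (embV (XY y)))) := by
  rw [lieBkt, lieBkt, hdecompY y, hdecompZ y, map_add, map_add, map_smul, map_smul,
    fderiv_embV_of_decomp hdecompZ hZ hnv hfZ hXZ, fderiv_embV_of_decomp hdecompY hY hnv hfY hXY,
    embV_sub]
  module

end Killing

theorem killing_commutator_lapse_shift_decomposition_general (n : ℕ)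
    (G : Vec (n + 1) → Matrix (Fin (n + 1)) (Fin (n + 1)) ℝ)
    (hGsm : ∀ μ ν, ContDiff ℝ 2 (fun x => G x μ ν)) (hGsym : ∀ x, (G x).IsSymm)
    (Y Z : Vec (n + 1) → Vec (n + 1)) (hYsm : ContDiff ℝ 2 Y) (hZsm : ContDiff ℝ 2 Z)
    (hKillY : ∀ x, ∀ μ ν, lieD Y G x μ ν = 0)
    (hKillZ : ∀ x, ∀ μ ν, lieD Z G x μ ν = 0)
    (nv : Vec (n + 1) → Vec (n + 1)) (hnvsm : ContDiff ℝ 1 nv)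
    (hunit : ∀ y : Vec n, apg G (emb y) (nv (emb y)) (nv (emb y)) = -1)
    (hnormal : ∀ y : Vec n, ∀ i : Fin n,
      apg G (emb y) (nv (emb y)) (embV (Pi.single i 1)) = 0)
    (hspacelike : ∀ y : Vec n, (indMetric G y).PosDef)
    (fY fZ : Vec n → ℝ) (XY XZ : Vec n → Vec n)
    (hfYsm : ContDiff ℝ 1 fY) (hfZsm : ContDiff ℝ 1 fZ)
    (hXYsm : ContDiff ℝ 1 XY) (hXZsm : ContDiff ℝ 1 XZ)
    (hdecompY : ∀ y : Vec n, Y (emb y) = (2 * fY y) • nv (emb y) + embV (XY y))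
    (hdecompZ : ∀ y : Vec n, Z (emb y) = (2 * fZ y) • nv (emb y) + embV (XZ y)) :
    ∀ y : Vec n,
      lieBkt Y Z (emb y)
        = (2 * (fderiv ℝ fZ y (XY y) - fderiv ℝ fY y (XZ y))) • nv (emb y)
          + embV (lieBkt XY XZ y
              + (4 * fY y) • gradSlice G fZ y - (4 * fZ y) • gradSlice G fY y) := by
  intro y
  have hG i j := (hGsm i j).differentiable two_ne_zero (emb y)
  have hY := hYsm.differentiable two_ne_zero (emb y)
  have hZ := hZsm.differentiable two_ne_zero (emb y)
  have hnv := hnvsm.differentiable one_ne_zero (emb y)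
  have hfY := hfYsm.differentiable one_ne_zero y
  have hfZ := hfZsm.differentiable one_ne_zero y
  have hXY := hXYsm.differentiable one_ne_zero y
  have hXZ := hXZsm.differentiable one_ne_zero y
  have hnormal' y := apg_embV_eq_zero G y (hnormal y)
  have hV : (2 * fY y) • (fderiv ℝ Z (emb y) (nv (emb y)) - fderiv ℝ nv (emb y) (embV (XZ y)))
        - (2 * fZ y) • (fderiv ℝ Y (emb y) (nv (emb y)) - fderiv ℝ nv (emb y) (embV (XY y)))
      = embV ((4 * fY y) • gradSlice G fZ y - (4 * fZ y) • gradSlice G fY y) := by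
    refine ext_of_apg_normal_of_apg_tangent (hGsym _) (hspacelike y) (hunit y) (hnormal' y) ?_
      fun i => ?_
    · simp only [apg_sub_left, apg_smul_left, apg_comm G _ (hGsym _) (embV _), hnormal',
        killing_normal_component (hGsym _) hG hnv (hKillZ _) hunit hdecompZ,
        killing_normal_component (hGsym _) hG hnv (hKillY _) hunit hdecompY]
      ring
    · simp only [apg_sub_left, apg_smul_left, embV_sub, embV_smul,
        apg_embV_gradSlice G y (hspacelike y),
        killing_tangent_component hG hZ hnv hfZ hXZ (hKillZ _) hunit hnormal' hdecompZ,
        killing_tangent_component hG hY hnv hfY hXY (hKillY _) hunit hnormal' hdecompY]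
      ring
  rw [lieBkt_emb_of_decomp hY hZ hnv hfY hfZ hXY hXZ hdecompY hdecompZ, hV, add_assoc, ← embV_add,
    add_sub_assoc]

/-- commutator decomposition: Let `(N, G)` be a Lorentzian manifold
(chart `ℝ^{n+1}`) with Killing fields `Y`, `Z`, and let `U = {x⁰ = 0}` be a spacelike slice
with future unit normal `nv`.  Writing `Y = 2f_Y·nv + X_Y` and `Z = 2f_Z·nv + X_Z` along `U`
with `X_Y, X_Z` tangential, the commutator `W = [Y, Z]` decomposes along `U` as
`W = 2f·nv + X` with `f = X_Y(f_Z) − X_Z(f_Y)` and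
`X = [X_Y, X_Z] + 4(f_Y ∇f_Z − f_Z ∇f_Y)`, `∇` being the gradient of the induced metric. -/
theorem killing_commutator_lapse_shift_decomposition (n : ℕ) (hn : 2 ≤ n)
    (G : Vec (n + 1) → Matrix (Fin (n + 1)) (Fin (n + 1)) ℝ)
    (hGsm : ∀ μ ν, ContDiff ℝ 2 (fun x => G x μ ν)) (hGsym : ∀ x, (G x).IsSymm)
    (Y Z : Vec (n + 1) → Vec (n + 1)) (hYsm : ContDiff ℝ 2 Y) (hZsm : ContDiff ℝ 2 Z)
    (hKillY : ∀ x, ∀ μ ν, lieD Y G x μ ν = 0)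
    (hKillZ : ∀ x, ∀ μ ν, lieD Z G x μ ν = 0)
    (nv : Vec (n + 1) → Vec (n + 1)) (hnvsm : ContDiff ℝ 1 nv)
    (hunit : ∀ y : Vec n, apg G (emb y) (nv (emb y)) (nv (emb y)) = -1)
    (hnormal : ∀ y : Vec n, ∀ i : Fin n,
      apg G (emb y) (nv (emb y)) (embV (Pi.single i 1)) = 0)
    (hfuture : ∀ y : Vec n, 0 < nv (emb y) 0)
    (hspacelike : ∀ y : Vec n, (indMetric G y).PosDef)
    (fY fZ : Vec n → ℝ) (XY XZ : Vec n → Vec n)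
    (hfYsm : ContDiff ℝ 1 fY) (hfZsm : ContDiff ℝ 1 fZ)
    (hXYsm : ContDiff ℝ 1 XY) (hXZsm : ContDiff ℝ 1 XZ)
    (hdecompY : ∀ y : Vec n, Y (emb y) = (2 * fY y) • nv (emb y) + embV (XY y))
    (hdecompZ : ∀ y : Vec n, Z (emb y) = (2 * fZ y) • nv (emb y) + embV (XZ y)) :
    ∀ y : Vec n,
      lieBkt Y Z (emb y)
        = (2 * (fderiv ℝ fZ y (XY y) - fderiv ℝ fY y (XZ y))) • nv (emb y)
          + embV (lieBkt XY XZ y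
              + (4 * fY y) • gradSlice G fZ y - (4 * fZ y) • gradSlice G fY y) :=
  killing_commutator_lapse_shift_decomposition_general n G hGsm hGsym Y Z hYsm hZsm hKillY hKillZ nv
    hnvsm hunit hnormal hspacelike fY fZ XY XZ hfYsm hfZsm hXYsm hXZsm hdecompY hdecompZ
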